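/- arXiv:2207.08233 — 4 statements merged into one kernel-verified Lean document; each statement's English description precedes it below -/
import Mathlib

section
/- Let D be an integral domain with fraction field F that is not a field. Then every n-universal subset of D has at least n+1 elements; i.e., for any subset S ⊆ D with |S| ≤ n, there exists a polynomial P ∈ F[X] of degree at most n such that P(S) ⊆ D but P(D) ⊄ D. -/
/-- Every `n`-universal subset of a domain `D` that is not a field has at least
`n+1` elements: any subset of cardinality at most `n` fails to be `n`-universal. -/
theorem stmt_0 {D F : Type*} [CommRing D] [IsDomain D] [Field F] [Algebra D F]
    [IsFractionRing D F] (hD : ¬ IsField D) (n : ℕ) (S : Finset D) (hS : S.card ≤ n) :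
    ∃ P : Polynomial F, P.natDegree ≤ n ∧
      (∀ s ∈ S, ∃ e : D, algebraMap D F e = P.eval (algebraMap D F s)) ∧
      ¬ (∀ d : D, ∃ e : D, algebraMap D F e = P.eval (algebraMap D F d)) := by
  have hinj : Function.Injective (algebraMap D F) := IsFractionRing.injective D F
  -- D is infinite (a finite domain is a field)
  have hinf : Infinite D := by
    by_contra h
    rw [not_infinite_iff_finite] at h
    exact hD (Finite.isField_of_domain D)
  obtain ⟨d, hd⟩ := Infinite.exists_notMem_finset S
  set b : D := ∏ s ∈ S, (d - s) with hb
  have hbne : b ≠ 0 := by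
    rw [hb]
    apply Finset.prod_ne_zero_iff.mpr
    intro s hs
    exact sub_ne_zero.mpr (fun h => hd (h ▸ hs))
  -- choose a nonzero a with a ∤ b
  obtain ⟨a, hane, hndvd⟩ : ∃ a : D, a ≠ 0 ∧ ¬ a ∣ b := by
    by_cases hbu : IsUnit b
    · obtain ⟨a, hane, hanu⟩ := Ring.exists_not_isUnit_of_not_isField hD
      exact ⟨a, hane, fun hdvd => hanu (isUnit_of_dvd_unit hdvd hbu)⟩
    · refine ⟨b * b, mul_ne_zero hbne hbne, fun ⟨c, hc⟩ => hbu ?_⟩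
      have : b * (b * c) = b * 1 := by ring_nf; linear_combination -hc
      exact IsUnit.of_mul_eq_one (a := b) c (mul_left_cancel₀ hbne this)
  have haF : algebraMap D F a ≠ 0 := fun h => hane (hinj (h.trans (map_zero _).symm))
  refine ⟨Polynomial.C (algebraMap D F a)⁻¹ *
      ∏ s ∈ S, (Polynomial.X - Polynomial.C (algebraMap D F s)), ?_, ?_, ?_⟩
  · calc (Polynomial.C (algebraMap D F a)⁻¹ *
        ∏ s ∈ S, (Polynomial.X - Polynomial.C (algebraMap D F s))).natDegree
        ≤ (∏ s ∈ S, (Polynomial.X - Polynomial.C (algebraMap D F s))).natDegree :=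
          Polynomial.natDegree_C_mul_le _ _
      _ ≤ ∑ s ∈ S, (Polynomial.X - Polynomial.C (algebraMap D F s)).natDegree :=
          Polynomial.natDegree_prod_le _ _
      _ = S.card := by simp [Polynomial.natDegree_X_sub_C]
      _ ≤ n := hS
  · intro s hs
    refine ⟨0, ?_⟩
    rw [map_zero, Polynomial.eval_mul, Polynomial.eval_prod]
    have : ∏ t ∈ S, (Polynomial.X - Polynomial.C (algebraMap D F t)).eval
        (algebraMap D F s) = 0 :=
      Finset.prod_eq_zero hs (by simp)
    rw [this, mul_zero]
  · intro hall
    obtain ⟨e, he⟩ := hall d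
    apply hndvd ⟨e, ?_⟩
    apply hinj
    rw [Polynomial.eval_mul, Polynomial.eval_prod] at he
    have hprod : ∏ s ∈ S, (Polynomial.X - Polynomial.C (algebraMap D F s)).eval
        (algebraMap D F d) = algebraMap D F b := by
      rw [hb, map_prod]
      exact Finset.prod_congr rfl fun s _ => by simp
    rw [hprod, Polynomial.eval_C] at he
    rw [map_mul]
    field_simp at he
    linear_combination -he
end

section
/- Let K be a number field whose ring of integers O_K admits a Schinzel sequence. Then O_K is a Euclidean domain with respect to the absolute field norm N, i.e., for all a, b ∈ O_K with a ≠ 0 and a not a unit, there exist c, r ∈ O_K with b = c·a + r and N(r) < N(a). -/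
open NumberField

/-- `a` is a Schinzel sequence in `𝓞 K`: for every nonzero ideal `I`, the elements
`a 0, …, a (N(I) - 1)` form a complete system of representatives of `𝓞 K ⧸ I`. -/
def IsSchinzelSeq {K : Type*} [Field K] [NumberField K] (a : ℕ → 𝓞 K) : Prop :=
  ∀ I : Ideal (𝓞 K), I ≠ ⊥ →
    Function.Bijective (fun i : Fin (Ideal.absNorm I) => Ideal.Quotient.mk I (a i))

set_option synthInstance.maxHeartbeats 400000 in
/-- If the ring of integers of a number field admits a Schinzel sequence, then it is
Euclidean with respect to the absolute norm. -/
theorem stmt_7 {K : Type*} [Field K] [NumberField K] (a : ℕ → 𝓞 K)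
    (ha : IsSchinzelSeq a) :
    ∀ b c : 𝓞 K, c ≠ 0 → ¬ IsUnit c →
      ∃ q r : 𝓞 K, b = q * c + r ∧
        Ideal.absNorm (Ideal.span {r}) < Ideal.absNorm (Ideal.span {c}) := by
  intro b c hc _
  set I := Ideal.span {c} with hI
  have hIbot : I ≠ ⊥ := by
    simpa [hI, Ideal.span_singleton_eq_bot] using hc
  have hN : 0 < Ideal.absNorm I :=
    Nat.pos_of_ne_zero (by rwa [Ne, Ideal.absNorm_eq_zero_iff])
  obtain ⟨i, hi⟩ := (ha I hIbot).2 (Ideal.Quotient.mk I b)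
  obtain ⟨j, hj⟩ := (ha I hIbot).2 0
  set r := a i - a j with hr
  simp only at hi hj
  have hmem : b - r ∈ I := by
    rw [← Ideal.Quotient.eq_zero_iff_mem, hr, map_sub, map_sub, hi, hj]
    ring
  obtain ⟨q, hq⟩ := Ideal.mem_span_singleton'.mp hmem
  refine ⟨q, r, by rw [hq]; ring, ?_⟩
  by_cases hr0 : r = 0
  · simpa [hr0] using hN
  · set J := Ideal.span {r} with hJ
    have hJbot : J ≠ ⊥ := by
      simpa [hJ, Ideal.span_singleton_eq_bot] using hr0
    by_contra h
    push_neg at h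
    have hi' : (i : ℕ) < Ideal.absNorm J := lt_of_lt_of_le i.isLt h
    have hj' : (j : ℕ) < Ideal.absNorm J := lt_of_lt_of_le j.isLt h
    have hmk : Ideal.Quotient.mk J (a i) = Ideal.Quotient.mk J (a j) := by
      rw [Ideal.Quotient.mk_eq_mk_iff_sub_mem, ← hr]
      exact Ideal.mem_span_singleton_self r
    have h2 := (ha J hJbot).1 (a₁ := ⟨i, hi'⟩) (a₂ := ⟨j, hj'⟩) hmk
    have hij : (i : ℕ) = (j : ℕ) := by simpa using h2
    have hij' : i = j := Fin.ext hij
    apply hr0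
    rw [hr, hij', sub_self]
end

section
/- If (a_i)_{i∈ℕ} is a Schinzel sequence in O_K with a_0 = 0, then for every j ≥ 1, the norm of a_j satisfies N(a_j) ≤ j. -/
open NumberField

/-- If `(a_i)` is a Schinzel sequence with `a 0 = 0`, then `N(a_j) ≤ j` for all `j ≥ 1`. -/
theorem stmt_8 {K : Type*} [Field K] [NumberField K] (a : ℕ → 𝓞 K)
    (ha : IsSchinzelSeq a) (h0 : a 0 = 0) :
    ∀ j : ℕ, 1 ≤ j → Ideal.absNorm (Ideal.span {a j}) ≤ j := by
  intro j hj
  by_contra hlt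
  push_neg at hlt
  set I := Ideal.span {a j} with hI
  have hIne : I ≠ ⊥ := by
    intro hbot
    have hz : Ideal.absNorm I = 0 := by rw [hbot]; simp
    omega
  have hinj := (ha I hIne).1
  have h0mem : (0 : 𝓞 K) ∈ I := I.zero_mem
  have hjmem : a j ∈ I := Ideal.subset_span rfl
  have h0' : (0 : ℕ) < Ideal.absNorm I := by omega
  have heq : Ideal.Quotient.mk I (a (⟨0, h0'⟩ : Fin (Ideal.absNorm I))) =
      Ideal.Quotient.mk I (a (⟨j, hlt⟩ : Fin (Ideal.absNorm I))) := by
    simp only [h0]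
    rw [Ideal.Quotient.eq]
    simpa using I.neg_mem hjmem
  have := hinj heq
  simp [Fin.ext_iff] at this
  omega
end

section
/- Let K be a number field with ring of integers O_K, and let 𝔭 be a nonzero prime ideal. If (a_i)_{i∈ℕ} ⊆ E ⊆ O_K is a 𝔭-ordering of E, then the value v_E(𝔭, n) = v_𝔭(∏_{i=0}^{n-1}(a_i − a_n)) does not depend on the choice of 𝔭-ordering of E. -/
open NumberField

/-- The `𝔭`-adic valuation of `x ∈ 𝓞 K`, as the multiplicity of the prime ideal `𝔭`
in the principal ideal `(x)` (it takes the value `⊤` at `x = 0`). -/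
noncomputable def valP {K : Type*} [Field K] [NumberField K]
    (𝔭 : Ideal (𝓞 K)) (x : 𝓞 K) : ℕ∞ :=
  emultiplicity 𝔭 (Ideal.span {x})

/-- `a` is a `𝔭`-ordering of `E`: a sequence in `E` such that for all `n ≥ 1`,
`v_𝔭(∏_{i<n}(a_i - a_n))` is minimal among `v_𝔭(∏_{i<n}(a_i - x))` for `x ∈ E`. -/
def IsPOrdering {K : Type*} [Field K] [NumberField K]
    (𝔭 : Ideal (𝓞 K)) (E : Set (𝓞 K)) (a : ℕ → 𝓞 K) : Prop :=
  (∀ i, a i ∈ E) ∧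
  ∀ n : ℕ, 1 ≤ n →
    valP 𝔭 (∏ i ∈ Finset.range n, (a i - a n)) =
      ⨅ x ∈ E, valP 𝔭 (∏ i ∈ Finset.range n, (a i - x))

section Aux

open Finset Polynomial

variable {K : Type*} [Field K] [NumberField K] {𝔭 : Ideal (𝓞 K)}

lemma enat_eq_top_of_forall_le {e : ℕ∞} (h : ∀ k : ℕ, (k : ℕ∞) ≤ e) : e = ⊤ := by
  cases e with
  | top => rfl
  | coe m => exact absurd (Nat.cast_le.mp (h (m + 1))) (by omega)

lemma valP_zero : valP 𝔭 (0 : 𝓞 K) = ⊤ := by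
  have h : Ideal.span {(0 : 𝓞 K)} = 0 := by simp [Ideal.zero_eq_bot]
  rw [valP, h, emultiplicity_zero]

lemma valP_one (hp : Prime 𝔭) : valP 𝔭 (1 : 𝓞 K) = 0 := by
  rw [valP]
  exact emultiplicity_of_isUnit_right hp.not_unit (by simp [Ideal.one_eq_top])

lemma valP_eq_top_iff (hp : Prime 𝔭) {x : 𝓞 K} : valP 𝔭 x = ⊤ ↔ x = 0 := by
  constructor
  · intro h
    by_contra hx
    have hf : FiniteMultiplicity 𝔭 (Ideal.span {x}) :=
      FiniteMultiplicity.of_prime_left hp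
        (by simp [Ideal.zero_eq_bot, Ideal.span_singleton_eq_bot, hx])
    rw [valP, emultiplicity_eq_top] at h
    exact h hf
  · rintro rfl; exact valP_zero

lemma valP_mul (hp : Prime 𝔭) (x y : 𝓞 K) :
    valP 𝔭 (x * y) = valP 𝔭 x + valP 𝔭 y := by
  rw [valP, valP, valP, ← Ideal.span_singleton_mul_span_singleton, emultiplicity_mul hp]

lemma valP_prod (hp : Prime 𝔭) {ι : Type*} (s : Finset ι) (f : ι → 𝓞 K) :
    valP 𝔭 (∏ i ∈ s, f i) = ∑ i ∈ s, valP 𝔭 (f i) := by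
  classical
  induction s using Finset.cons_induction with
  | empty => simpa using valP_one hp
  | cons i s hi ih => rw [prod_cons, sum_cons, valP_mul hp, ih]

lemma valP_assoc {x y : 𝓞 K} (h : Associated x y) : valP 𝔭 x = valP 𝔭 y := by
  rw [valP, valP, Ideal.span_singleton_eq_span_singleton.mpr h]

lemma valP_neg (x : 𝓞 K) : valP 𝔭 (-x) = valP 𝔭 x :=
  (valP_assoc ⟨-1, by simp⟩).symm

lemma le_valP {k : ℕ} {x : 𝓞 K} : (k : ℕ∞) ≤ valP 𝔭 x ↔ x ∈ 𝔭 ^ k := by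
  rw [valP, ← pow_dvd_iff_le_emultiplicity, Ideal.dvd_span_singleton]

lemma le_valP_add {c : ℕ∞} {x y : 𝓞 K} (hx : c ≤ valP 𝔭 x) (hy : c ≤ valP 𝔭 y) :
    c ≤ valP 𝔭 (x + y) := by
  cases c with
  | top =>
    rw [top_le_iff] at hx hy
    rw [top_le_iff]
    refine enat_eq_top_of_forall_le fun k => ?_
    exact le_valP.mpr (add_mem (le_valP.mp (hx ▸ le_top)) (le_valP.mp (hy ▸ le_top)))
  | coe k =>
    exact le_valP.mpr (add_mem (le_valP.mp hx) (le_valP.mp hy))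

lemma le_valP_sum {ι : Type*} {c : ℕ∞} (s : Finset ι) (f : ι → 𝓞 K)
    (h : ∀ i ∈ s, c ≤ valP 𝔭 (f i)) : c ≤ valP 𝔭 (∑ i ∈ s, f i) := by
  classical
  induction s using Finset.cons_induction with
  | empty => simp [valP_zero]
  | cons i s hi ih =>
    rw [sum_cons]
    exact le_valP_add (h i (mem_cons_self i s)) (ih fun j hj => h j (mem_cons_of_mem hj))

/-- The valuation of the Vandermonde determinant of `c 0, …, c (n-1)` is the sum of the
valuations of the partial products. -/
lemma valP_det_vandermonde (hp : Prime 𝔭) (n : ℕ) (c : ℕ → 𝓞 K) :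
    valP 𝔭 (Matrix.vandermonde fun j : Fin n => c j).det =
      ∑ k ∈ range n, valP 𝔭 (∏ i ∈ range k, (c i - c k)) := by
  rw [Matrix.det_vandermonde, valP_prod hp]
  have h1 : ∀ i : Fin n, valP 𝔭 (∏ j ∈ Ioi i, (c j - c i)) =
      ∑ j ∈ Ioi i, valP 𝔭 (c j - c i) := fun i => valP_prod hp _ _
  have h2 : ∀ k : ℕ, valP 𝔭 (∏ i ∈ range k, (c i - c k)) =
      ∑ i ∈ range k, valP 𝔭 (c k - c i) := by
    intro k
    rw [valP_prod hp]
    exact Finset.sum_congr rfl fun i _ => by rw [← neg_sub (c k) (c i), valP_neg]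
  simp only [h1, h2]
  rw [Finset.sum_comm' (t' := (univ : Finset (Fin n))) (s' := fun j => Iio j) (by simp)]
  rw [← Fin.sum_univ_eq_sum_range (fun k => ∑ i ∈ range k, valP 𝔭 (c k - c i)) n]
  refine Finset.sum_congr rfl fun j _ => ?_
  rw [show ∑ x ∈ Iio j, valP 𝔭 (c ↑j - c ↑x)
      = ∑ i ∈ (Iio j).map Fin.valEmbedding, valP 𝔭 (c ↑j - c i) from
      (Finset.sum_map (Iio j) Fin.valEmbedding (fun i => valP 𝔭 (c ↑j - c i))).symm,
    Fin.map_valEmbedding_Iio, Nat.Iio_eq_range]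

/-- Key inequality: the partial sums of the valuations along a `𝔭`-ordering `a` are at most
the corresponding sums along any sequence `b` in `E`. -/
lemma key_le (hp : Prime 𝔭) {E : Set (𝓞 K)} {a b : ℕ → 𝓞 K}
    (ha : IsPOrdering 𝔭 E a) (hbE : ∀ i, b i ∈ E) (n : ℕ) :
    ∑ k ∈ range n, valP 𝔭 (∏ i ∈ range k, (a i - a k)) ≤
      ∑ k ∈ range n, valP 𝔭 (∏ i ∈ range k, (b i - b k)) := by
  classical
  set p : Fin n → (𝓞 K)[X] := fun k => ∏ i ∈ range (k : ℕ), (X - C (a i)) with hpdef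
  have hmonic : ∀ k, (p k).Monic := fun k =>
    monic_prod_of_monic _ _ fun i _ => monic_X_sub_C (a i)
  have hdeg : ∀ k : Fin n, (p k).natDegree = k := by
    intro k
    rw [hpdef]
    rw [natDegree_prod_of_monic _ _ (fun i _ => monic_X_sub_C (a i))]
    simp [natDegree_X_sub_C]
  have hA : ∀ (k : ℕ) (x : 𝓞 K), x ∈ E →
      valP 𝔭 (∏ i ∈ range k, (a i - a k)) ≤ valP 𝔭 (∏ i ∈ range k, (a i - x)) := by
    intro k x hx
    rcases Nat.eq_zero_or_pos k with rfl | hk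
    · simp
    · rw [ha.2 k hk]
      exact iInf₂_le x hx
  have heval : ∀ (k : Fin n) (x : 𝓞 K), x ∈ E →
      valP 𝔭 (∏ i ∈ range (k : ℕ), (a i - a k)) ≤ valP 𝔭 ((p k).eval x) := by
    intro k x hx
    have he : (p k).eval x = ∏ i ∈ range (k : ℕ), (x - a i) := by
      simp [hpdef, eval_prod]
    rw [he]
    have hassoc : valP 𝔭 (∏ i ∈ range (k : ℕ), (x - a i)) =
        valP 𝔭 (∏ i ∈ range (k : ℕ), (a i - x)) := by
      rw [valP_prod hp, valP_prod hp]
      exact Finset.sum_congr rfl fun i _ => by rw [← neg_sub (a i) x, valP_neg]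
    rw [hassoc]
    exact hA k x hx
  set M : Matrix (Fin n) (Fin n) (𝓞 K) := Matrix.of fun i j => (p j).eval (b i) with hM
  have hdet : (Matrix.vandermonde fun j : Fin n => b j).det = M.det :=
    Matrix.det_eval_matrixOfPolynomials_eq_det_vandermonde _ p hdeg hmonic
  have hbound : (∑ k ∈ range n, valP 𝔭 (∏ i ∈ range k, (a i - a k))) ≤ valP 𝔭 M.det := by
    rw [Matrix.det_apply]
    refine le_valP_sum _ _ fun σ _ => ?_
    have hterm : valP 𝔭 (Equiv.Perm.sign σ • ∏ i, M (σ i) i) =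
        valP 𝔭 (∏ i, M (σ i) i) := by
      rcases Int.units_eq_one_or (Equiv.Perm.sign σ) with h | h <;> rw [h] <;>
        simp [Units.smul_def, valP_neg]
    rw [hterm, valP_prod hp,
      ← Fin.sum_univ_eq_sum_range (fun k => valP 𝔭 (∏ i ∈ range k, (a i - a k))) n]
    exact Finset.sum_le_sum fun i _ => heval i (b (σ i)) (hbE (σ i))
  calc ∑ k ∈ range n, valP 𝔭 (∏ i ∈ range k, (a i - a k))
      ≤ valP 𝔭 M.det := hbound
    _ = valP 𝔭 (Matrix.vandermonde fun j : Fin n => b j).det := by rw [hdet]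
    _ = ∑ k ∈ range n, valP 𝔭 (∏ i ∈ range k, (b i - b k)) :=
        valP_det_vandermonde hp n b

/-- If the `n`-th value of a `𝔭`-ordering is `⊤` then so are all later values. -/
lemma top_propagate (hp : Prime 𝔭) {E : Set (𝓞 K)} {c : ℕ → 𝓞 K}
    (hc : IsPOrdering 𝔭 E c) {m n : ℕ} (hm : 1 ≤ m) (hmn : m ≤ n)
    (htop : valP 𝔭 (∏ i ∈ range m, (c i - c m)) = ⊤) :
    valP 𝔭 (∏ i ∈ range n, (c i - c n)) = ⊤ := by
  have h1 : ∀ x ∈ E, ∃ i < m, c i = x := by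
    intro x hx
    have hx' : valP 𝔭 (∏ i ∈ range m, (c i - x)) = ⊤ := by
      rw [hc.2 m hm] at htop
      exact top_le_iff.mp (htop ▸ iInf₂_le x hx)
    have hzero : ∏ i ∈ range m, (c i - x) = 0 := (valP_eq_top_iff hp).mp hx'
    obtain ⟨i, hi, hz⟩ := Finset.prod_eq_zero_iff.mp hzero
    exact ⟨i, mem_range.mp hi, sub_eq_zero.mp hz⟩
  have hn : 1 ≤ n := le_trans hm hmn
  rw [hc.2 n hn]
  simp only [iInf_eq_top]
  intro x hx
  obtain ⟨i, him, hxi⟩ := h1 x hx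
  have hzero : ∏ i ∈ range n, (c i - x) = 0 :=
    Finset.prod_eq_zero (mem_range.mpr (lt_of_lt_of_le him hmn)) (by rw [hxi, sub_self])
  rw [hzero]
  exact valP_zero

end Aux

/-- The value `v_E(𝔭, n)` does not depend on the choice of `𝔭`-ordering of `E`. -/
theorem stmt_12 {K : Type*} [Field K] [NumberField K]
    (𝔭 : Ideal (𝓞 K)) (h𝔭 : 𝔭.IsPrime) (hne : 𝔭 ≠ ⊥)
    (E : Set (𝓞 K)) (a b : ℕ → 𝓞 K)
    (ha : IsPOrdering 𝔭 E a) (hb : IsPOrdering 𝔭 E b) :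
    ∀ n : ℕ, 1 ≤ n →
      valP 𝔭 (∏ i ∈ Finset.range n, (a i - a n)) =
        valP 𝔭 (∏ i ∈ Finset.range n, (b i - b n)) := by
  open Finset in
  have hp : Prime 𝔭 := Ideal.prime_of_isPrime hne h𝔭
  have hsum : ∀ m : ℕ,
      ∑ k ∈ Finset.range m, valP 𝔭 (∏ i ∈ Finset.range k, (a i - a k)) =
        ∑ k ∈ Finset.range m, valP 𝔭 (∏ i ∈ Finset.range k, (b i - b k)) := fun m =>
    le_antisymm (key_le hp ha hb.1 m) (key_le hp hb ha.1 m)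
  have main : ∀ n : ℕ,
      valP 𝔭 (∏ i ∈ Finset.range n, (a i - a n)) =
        valP 𝔭 (∏ i ∈ Finset.range n, (b i - b n)) := by
    intro n
    induction n using Nat.strong_induction_on with
    | _ n ih =>
      rcases Nat.eq_zero_or_pos n with rfl | hn
      · simp
      by_cases htop : ∑ k ∈ Finset.range n, valP 𝔭 (∏ i ∈ Finset.range k, (a i - a k)) = ⊤
      · obtain ⟨m, hm, hAm⟩ := WithTop.sum_eq_top.mp htop
        have hm1 : 1 ≤ m := by
          rcases Nat.eq_zero_or_pos m with rfl | h
          · simp only [Finset.range_zero, Finset.prod_empty] at hAm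
            rw [valP_one hp] at hAm
            exact absurd hAm WithTop.zero_ne_top
          · exact h
        have h1 := top_propagate hp ha hm1 (le_of_lt (Finset.mem_range.mp hm)) hAm
        have htopb : ∑ k ∈ Finset.range n, valP 𝔭 (∏ i ∈ Finset.range k, (b i - b k)) = ⊤ :=
          (hsum n) ▸ htop
        obtain ⟨m', hm', hBm⟩ := WithTop.sum_eq_top.mp htopb
        have hm'1 : 1 ≤ m' := by
          rcases Nat.eq_zero_or_pos m' with rfl | h
          · simp only [Finset.range_zero, Finset.prod_empty] at hBm
            rw [valP_one hp] at hBm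
            exact absurd hBm WithTop.zero_ne_top
          · exact h
        have h2 := top_propagate hp hb hm'1 (le_of_lt (Finset.mem_range.mp hm')) hBm
        rw [h1, h2]
      · have h := hsum (n + 1)
        rw [Finset.sum_range_succ, Finset.sum_range_succ] at h
        have hpre : ∑ k ∈ Finset.range n, valP 𝔭 (∏ i ∈ Finset.range k, (a i - a k)) =
            ∑ k ∈ Finset.range n, valP 𝔭 (∏ i ∈ Finset.range k, (b i - b k)) :=
          Finset.sum_congr rfl fun k hk => ih k (Finset.mem_range.mp hk)
        rw [hpre] at h
        exact WithTop.add_left_cancel (hpre ▸ htop) h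
  exact fun n _ => main n
end
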